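/- For all positive reals $a_1,a_2,a_3,a_4$ and each fixed $i \in \{1,2,3,4\}$, $\Lambda(a_1,a_2,a_3,a_4) \ge (a_1+a_2+a_3+a_4) - 2a_i$. This follows from the identity $(a_1a_2+a_3a_4)(a_1a_3+a_2a_4)(a_1a_4+a_2a_3) - a_1a_2a_3a_4\left(\sum_j a_j - 2a_i\right)^2 = (a_1a_2a_3a_4)^2 \left(\sum_j \frac{1}{a_j} - \frac{2}{a_i}\right)^2$. -/
import Mathlib


open Real

theorem stmt_16 (a : Fin 4 → ℝ) (ha : ∀ i, 0 < a i) (i : Fin 4) :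
    ((∑ j : Fin 4, a j) - 2 * a i ≤
      Real.sqrt ((a 0 * a 1 + a 2 * a 3) * (a 0 * a 2 + a 1 * a 3) * (a 0 * a 3 + a 1 * a 2) /
        (a 0 * a 1 * a 2 * a 3))) ∧
    ((a 0 * a 1 + a 2 * a 3) * (a 0 * a 2 + a 1 * a 3) * (a 0 * a 3 + a 1 * a 2) -
        (a 0 * a 1 * a 2 * a 3) * ((∑ j : Fin 4, a j) - 2 * a i) ^ 2 =
      (a 0 * a 1 * a 2 * a 3) ^ 2 * ((∑ j : Fin 4, 1 / a j) - 2 / a i) ^ 2) := by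
  have h0 := ha 0
  have h1 := ha 1
  have h2 := ha 2
  have h3 := ha 3
  have hD : 0 < a 0 * a 1 * a 2 * a 3 := by positivity
  have hid : (a 0 * a 1 + a 2 * a 3) * (a 0 * a 2 + a 1 * a 3) * (a 0 * a 3 + a 1 * a 2) -
        (a 0 * a 1 * a 2 * a 3) * ((∑ j : Fin 4, a j) - 2 * a i) ^ 2 =
      (a 0 * a 1 * a 2 * a 3) ^ 2 * ((∑ j : Fin 4, 1 / a j) - 2 / a i) ^ 2 := by
    fin_cases i <;> simp [Fin.sum_univ_four] <;>
      field_simp <;> ring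
  refine ⟨?_, hid⟩
  have hle : ((∑ j : Fin 4, a j) - 2 * a i) ^ 2 ≤
      (a 0 * a 1 + a 2 * a 3) * (a 0 * a 2 + a 1 * a 3) * (a 0 * a 3 + a 1 * a 2) /
        (a 0 * a 1 * a 2 * a 3) := by
    rw [le_div_iff₀ hD]
    nlinarith [sq_nonneg ((∑ j : Fin 4, 1 / a j) - 2 / a i), sq_nonneg (a 0 * a 1 * a 2 * a 3)]
  calc (∑ j : Fin 4, a j) - 2 * a i ≤ |(∑ j : Fin 4, a j) - 2 * a i| := le_abs_self _
    _ = Real.sqrt (((∑ j : Fin 4, a j) - 2 * a i) ^ 2) := (Real.sqrt_sq_eq_abs _).symm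
    _ ≤ _ := Real.sqrt_le_sqrt hle
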